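/- In the polar n-complex algebra ℝ[X]/(X^n - 1) with even n, the idempotent-type bases e_+ = (1/n)Σ_{p=0}^{n-1} h_p, e_- = (1/n)Σ_{p=0}^{n-1}(-1)^p h_p, e_k = (2/n)Σ_{p=0}^{n-1} cos(2πkp/n) h_p and ẽ_k = (2/n)Σ_{p=0}^{n-1} sin(2πkp/n) h_p (for 1 ≤ k ≤ n/2 - 1) satisfy: e_+² = e_+, e_-² = e_-, e_+e_- = 0, e_k² = e_k, ẽ_k² = -e_k, e_k ẽ_k = ẽ_k, and e_k e_l = e_k ẽ_l = ẽ_k ẽ_l = 0 for k ≠ l. -/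

import Mathlib

open scoped Real

/-- The polar n-complex algebra `ℝ[X]/(X^n - 1)`. -/
noncomputable abbrev PolarC (n : ℕ) : Type :=
  AdjoinRoot ((Polynomial.X : Polynomial ℝ) ^ n - 1)

/-- The polar basis `h_p`, the class of `X^p`. -/
noncomputable def hP (n p : ℕ) : PolarC n := (AdjoinRoot.root _) ^ p

/-- `e_+`. -/
noncomputable def ePlus (n : ℕ) : PolarC n :=
  ((1 : ℝ) / n) • ∑ p ∈ Finset.range n, hP n p

/-- `e_-`. -/
noncomputable def eMinus (n : ℕ) : PolarC n :=
  ((1 : ℝ) / n) • ∑ p ∈ Finset.range n, ((-1 : ℝ) ^ p) • hP n p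

/-- `e_k`. -/
noncomputable def eK (n k : ℕ) : PolarC n :=
  ((2 : ℝ) / n) • ∑ p ∈ Finset.range n, (Real.cos (2 * π * k * p / n)) • hP n p

/-- `ẽ_k`. -/
noncomputable def eTildeK (n k : ℕ) : PolarC n :=
  ((2 : ℝ) / n) • ∑ p ∈ Finset.range n, (Real.sin (2 * π * k * p / n)) • hP n p

/-! ### Auxiliary arithmetic lemmas -/

lemma polarAux1 (n p q : ℕ) (hp : p < n) (hq : q < n) : (n + (p+q)%n - p) % n = q := by
  have h1 : (n + (p+q)%n - p) + p ≡ q + p [MOD n] := by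
    have e : (n + (p+q)%n - p) + p = n + (p+q)%n := by omega
    rw [e]
    calc n + (p+q)%n ≡ 0 + (p+q)%n [MOD n] :=
          Nat.ModEq.add_right _ (Nat.modEq_zero_iff_dvd.mpr dvd_rfl)
      _ ≡ 0 + (p+q) [MOD n] := Nat.ModEq.add_left _ (Nat.mod_modEq _ _)
      _ = q + p := by ring
  have h2 : (n + (p+q)%n - p) ≡ q [MOD n] := h1.add_right_cancel' p
  calc (n + (p+q)%n - p) % n = q % n := h2
    _ = q := Nat.mod_eq_of_lt hq

lemma polarAux2 (n p s : ℕ) (hp : p < n) (hs : s < n) : (p + (n+s-p)%n) % n = s := by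
  have h1 : p + (n+s-p)%n ≡ s [MOD n] := by
    calc p + (n+s-p)%n ≡ p + (n+s-p) [MOD n] := Nat.ModEq.add_left _ (Nat.mod_modEq _ _)
      _ = n + s := by omega
      _ ≡ 0 + s [MOD n] := Nat.ModEq.add_right _ (Nat.modEq_zero_iff_dvd.mpr dvd_rfl)
      _ = s := by ring
  calc (p + (n+s-p)%n) % n = s % n := h1
    _ = s := Nat.mod_eq_of_lt hs

lemma polarRootPow (n : ℕ) :
    (AdjoinRoot.root ((Polynomial.X : Polynomial ℝ) ^ n - 1)) ^ n = 1 := by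
  have h := AdjoinRoot.mk_self (f := (Polynomial.X : Polynomial ℝ) ^ n - 1)
  rw [map_sub, map_pow, map_one, AdjoinRoot.mk_X, sub_eq_zero] at h
  exact h

lemma hP_mul (n : ℕ) (p q : ℕ) : hP n p * hP n q = hP n ((p + q) % n) := by
  unfold hP
  rw [← pow_add]
  conv_lhs => rw [show p + q = n * ((p+q)/n) + (p+q) % n from (Nat.div_add_mod _ _).symm ▸ rfl]
  rw [pow_add, pow_mul, polarRootPow, one_pow, one_mul]

/-- Convolution formula for products of coefficient sums. -/
lemma polarConv (n : ℕ) (hn : 0 < n) (a b : ℕ → ℝ) :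
    (∑ p ∈ Finset.range n, a p • hP n p) * (∑ q ∈ Finset.range n, b q • hP n q)
      = ∑ s ∈ Finset.range n, (∑ p ∈ Finset.range n, a p * b ((n + s - p) % n)) • hP n s := by
  rw [Finset.sum_mul_sum]
  have key : ∀ p ∈ Finset.range n,
      ∑ q ∈ Finset.range n, (a p • hP n p) * (b q • hP n q)
        = ∑ s ∈ Finset.range n, (a p * b ((n + s - p) % n)) • hP n s := by
    intro p hp
    simp only [Finset.mem_range] at hp
    refine Finset.sum_bij' (fun q _ => (p + q) % n) (fun s _ => (n + s - p) % n) ?_ ?_ ?_ ?_ ?_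
    · intro q hq; exact Finset.mem_range.mpr (Nat.mod_lt _ hn)
    · intro s hs; exact Finset.mem_range.mpr (Nat.mod_lt _ hn)
    · intro q hq; simp only [Finset.mem_range] at hq; exact polarAux1 n p q hp hq
    · intro s hs; simp only [Finset.mem_range] at hs; exact polarAux2 n p s hp hs
    · intro q hq; simp only [Finset.mem_range] at hq
      rw [smul_mul_smul_comm, hP_mul n]
      congr 2
      exact congrArg b (polarAux1 n p q hp hq).symm
  rw [Finset.sum_congr rfl key, Finset.sum_comm]
  refine Finset.sum_congr rfl fun s hs => ?_
  rw [Finset.sum_smul]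

/-! ### Trigonometric sums over a full period -/

lemma polarNotDvd (n : ℕ) (m : ℤ) (h1 : m ≠ 0) (h2 : m.natAbs < n) : ¬ (n:ℤ) ∣ m := by
  intro h
  have h3 : n ∣ m.natAbs := Int.ofNat_dvd.mp (Int.dvd_natAbs.mpr h)
  have h4 : 0 < m.natAbs := Int.natAbs_pos.mpr h1
  exact absurd (Nat.le_of_dvd h4 h3) (by omega)

lemma polarSumExp (n : ℕ) (hn : 0 < n) (m : ℤ) (hm : ¬ (n:ℤ) ∣ m) (c : ℝ) :
    ∑ p ∈ Finset.range n, Complex.exp (((2*π*m*p/n + c : ℝ)) * Complex.I) = 0 := by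
  have hn' : (n:ℂ) ≠ 0 := Nat.cast_ne_zero.mpr hn.ne'
  set z : ℂ := Complex.exp ((2*π*m/n : ℝ) * Complex.I) with hz
  have hzp : ∀ p : ℕ, Complex.exp (((2*π*m*p/n + c : ℝ)) * Complex.I)
      = Complex.exp ((c:ℝ) * Complex.I) * z ^ p := by
    intro p
    rw [hz, ← Complex.exp_nat_mul, ← Complex.exp_add]
    congr 1
    push_cast
    ring
  rw [Finset.sum_congr rfl fun p _ => hzp p, ← Finset.mul_sum]
  have hz1 : z ≠ 1 := by
    intro h
    rw [hz, Complex.exp_eq_one_iff] at h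
    obtain ⟨k, hk⟩ := h
    apply hm ⟨k, ?_⟩
    have h2c : ((2*π*m/n : ℝ) : ℂ) = (k:ℂ) * (2*π) := by
      apply mul_right_cancel₀ Complex.I_ne_zero
      rw [hk]; ring
    have h3 : (2*π*(m:ℝ)/n : ℝ) = (k:ℝ) * (2*π) := by exact_mod_cast h2c
    have hn0 : (n:ℝ) ≠ 0 := Nat.cast_ne_zero.mpr hn.ne'
    have h5 : 2*π*(m:ℝ) = 2*π*((k:ℝ)*(n:ℝ)) := by
      rw [div_eq_iff hn0] at h3
      linear_combination h3
    have h6 : (m:ℝ) = (k:ℝ)*(n:ℝ) :=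
      mul_left_cancel₀ (by positivity : (2*π:ℝ) ≠ 0) h5
    have : (m:ℝ) = ((n*k : ℤ) : ℝ) := by push_cast; linarith [h6]
    exact_mod_cast this
  have hzn : z ^ n = 1 := by
    rw [hz, ← Complex.exp_nat_mul]
    have : (n:ℂ) * (((2*π*m/n : ℝ)) * Complex.I) = (m:ℤ) * (2*(π:ℂ)*Complex.I) := by
      push_cast
      field_simp
    rw [this, Complex.exp_int_mul_two_pi_mul_I]
  rw [geom_sum_eq hz1, hzn, sub_self, zero_div, mul_zero]

lemma polarSumCos (n : ℕ) (hn : 0 < n) (m : ℤ) (hm : ¬ (n:ℤ) ∣ m) (c : ℝ) :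
    ∑ p ∈ Finset.range n, Real.cos (2*π*m*p/n + c) = 0 := by
  have h := polarSumExp n hn m hm c
  have e : ∑ p ∈ Finset.range n, Real.cos (2*π*m*p/n + c)
      = (∑ p ∈ Finset.range n, Complex.exp (((2*π*m*p/n + c : ℝ)) * Complex.I)).re := by
    rw [Complex.re_sum]
    exact Finset.sum_congr rfl fun p _ => (Complex.exp_ofReal_mul_I_re _).symm
  rw [e, h, Complex.zero_re]

lemma polarSumSin (n : ℕ) (hn : 0 < n) (m : ℤ) (hm : ¬ (n:ℤ) ∣ m) (c : ℝ) :
    ∑ p ∈ Finset.range n, Real.sin (2*π*m*p/n + c) = 0 := by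
  have h := polarSumExp n hn m hm c
  have e : ∑ p ∈ Finset.range n, Real.sin (2*π*m*p/n + c)
      = (∑ p ∈ Finset.range n, Complex.exp (((2*π*m*p/n + c : ℝ)) * Complex.I)).im := by
    rw [Complex.im_sum]
    exact Finset.sum_congr rfl fun p _ => (Complex.exp_ofReal_mul_I_im _).symm
  rw [e, h, Complex.zero_im]

/-! ### Periodicity of the coefficient functions -/

lemma polarCosMod (n k s p : ℕ) (hn : 0 < n) (hp : p ≤ n + s) :
    Real.cos (2*π*k*((n+s-p : ℕ)%n : ℕ)/n) = Real.cos (2*π*k*((s:ℝ)-p)/n) := by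
  have hn0 : (n:ℝ) ≠ 0 := Nat.cast_ne_zero.mpr hn.ne'
  set t : ℕ := (n+s-p)/n with ht
  set q : ℕ := (n+s-p)%n with hq
  have hdm : n * t + q = n+s-p := Nat.div_add_mod (n+s-p) n
  have hqr : (q:ℝ) = (n:ℝ) + s - p - n*t := by
    have h1 : ((n+s-p : ℕ) : ℝ) = (n:ℝ) + s - p := by
      rw [Nat.cast_sub hp]; push_cast; ring
    have h2 : ((n*t + q : ℕ) : ℝ) = (n:ℝ)*t + q := by push_cast; ring
    rw [hdm] at h2
    rw [h1] at h2
    linarith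
  have key : (2*π*k*(q:ℝ)/n : ℝ)
      = 2*π*k*((s:ℝ)-p)/n + (((k:ℤ)*(1 - (t:ℤ)) : ℤ) : ℝ)*(2*π) := by
    have hc : (((k:ℤ)*(1 - (t:ℤ)) : ℤ) : ℝ) = (k:ℝ)*(1 - (t:ℝ)) := by push_cast; ring
    rw [hqr, hc]
    field_simp
    ring
  rw [key, Real.cos_add_int_mul_two_pi]

lemma polarSinMod (n k s p : ℕ) (hn : 0 < n) (hp : p ≤ n + s) :
    Real.sin (2*π*k*((n+s-p : ℕ)%n : ℕ)/n) = Real.sin (2*π*k*((s:ℝ)-p)/n) := by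
  have hn0 : (n:ℝ) ≠ 0 := Nat.cast_ne_zero.mpr hn.ne'
  set t : ℕ := (n+s-p)/n with ht
  set q : ℕ := (n+s-p)%n with hq
  have hdm : n * t + q = n+s-p := Nat.div_add_mod (n+s-p) n
  have hqr : (q:ℝ) = (n:ℝ) + s - p - n*t := by
    have h1 : ((n+s-p : ℕ) : ℝ) = (n:ℝ) + s - p := by
      rw [Nat.cast_sub hp]; push_cast; ring
    have h2 : ((n*t + q : ℕ) : ℝ) = (n:ℝ)*t + q := by push_cast; ring
    rw [hdm] at h2
    rw [h1] at h2
    linarith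
  have key : (2*π*k*(q:ℝ)/n : ℝ)
      = 2*π*k*((s:ℝ)-p)/n + (((k:ℤ)*(1 - (t:ℤ)) : ℤ) : ℝ)*(2*π) := by
    have hc : (((k:ℤ)*(1 - (t:ℤ)) : ℤ) : ℝ) = (k:ℝ)*(1 - (t:ℝ)) := by push_cast; ring
    rw [hqr, hc]
    field_simp
    ring
  rw [key, Real.sin_add_int_mul_two_pi]

lemma polarNegPowMod (n s p : ℕ) (hn : Even n) (hp : p ≤ n + s) :
    ((-1:ℝ))^((n+s-p)%n) = (-1:ℝ)^s * (-1:ℝ)^p := by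
  obtain ⟨m, hm⟩ := hn
  set q : ℕ := (n+s-p)%n with hq
  set t : ℕ := (n+s-p)/n with ht
  have hdm : n * t + q = n+s-p := Nat.div_add_mod (n+s-p) n
  have hnt : n * t = 2 * (m * t) := by rw [hm]; ring
  have hpar : q % 2 = (s+p) % 2 := by
    rw [hnt] at hdm
    generalize m * t = u at hdm
    omega
  have key : (-1:ℝ)^q = (-1:ℝ)^(s+p) := by
    rcases Nat.even_or_odd (s+p) with h | h
    · rw [Even.neg_one_pow h, Even.neg_one_pow ?_]
      rw [Nat.even_iff] at h ⊢
      omega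
    · rw [Odd.neg_one_pow h, Odd.neg_one_pow ?_]
      rw [Nat.odd_iff] at h ⊢
      omega
  rw [key, pow_add]

/-! ### Product-to-sum identities -/

lemma polarCC (x y : ℝ) : Real.cos x * Real.cos y = (Real.cos (x+y) + Real.cos (x-y))/2 := by
  rw [Real.cos_add, Real.cos_sub]; ring

lemma polarSS (x y : ℝ) : Real.sin x * Real.sin y = (Real.cos (x-y) - Real.cos (x+y))/2 := by
  rw [Real.cos_add, Real.cos_sub]; ring

lemma polarCS (x y : ℝ) : Real.cos x * Real.sin y = (Real.sin (x+y) - Real.sin (x-y))/2 := by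
  rw [Real.sin_add, Real.sin_sub]; ring

/-! ### The six inner-sum computations -/

lemma polarSumCC (n k l s : ℕ) (hn : 0 < n)
    (hkl : ¬ ((n:ℤ) ∣ ((k:ℤ)+(l:ℤ)))) (hkl' : ¬ ((n:ℤ) ∣ ((k:ℤ)-(l:ℤ)))) :
    ∑ p ∈ Finset.range n, Real.cos (2*π*k*p/n) * Real.cos (2*π*l*((s:ℝ)-p)/n) = 0 := by
  have e : ∀ p ∈ Finset.range n,
      Real.cos (2*π*(k:ℝ)*p/n) * Real.cos (2*π*l*((s:ℝ)-p)/n)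
        = (Real.cos (2*π*((((k:ℤ)-(l:ℤ)) : ℤ) : ℝ)*p/n + 2*π*l*s/n)
           + Real.cos (2*π*((((k:ℤ)+(l:ℤ)) : ℤ) : ℝ)*p/n + (-(2*π*(l:ℝ)*s/n))))/2 := by
    intro p _
    rw [polarCC,
      show 2*π*(k:ℝ)*p/n + 2*π*l*((s:ℝ)-p)/n
          = 2*π*((((k:ℤ)-(l:ℤ)) : ℤ) : ℝ)*p/n + 2*π*l*s/n by push_cast; ring,
      show 2*π*(k:ℝ)*p/n - 2*π*l*((s:ℝ)-p)/n
          = 2*π*((((k:ℤ)+(l:ℤ)) : ℤ) : ℝ)*p/n + (-(2*π*(l:ℝ)*s/n)) by push_cast; ring]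
  rw [Finset.sum_congr rfl e, ← Finset.sum_div, Finset.sum_add_distrib,
    polarSumCos n hn _ hkl' _, polarSumCos n hn _ hkl _]
  norm_num

lemma polarSumTT (n k l s : ℕ) (hn : 0 < n)
    (hkl : ¬ ((n:ℤ) ∣ ((k:ℤ)+(l:ℤ)))) (hkl' : ¬ ((n:ℤ) ∣ ((k:ℤ)-(l:ℤ)))) :
    ∑ p ∈ Finset.range n, Real.sin (2*π*k*p/n) * Real.sin (2*π*l*((s:ℝ)-p)/n) = 0 := by
  have e : ∀ p ∈ Finset.range n,
      Real.sin (2*π*(k:ℝ)*p/n) * Real.sin (2*π*l*((s:ℝ)-p)/n)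
        = (Real.cos (2*π*((((k:ℤ)+(l:ℤ)) : ℤ) : ℝ)*p/n + (-(2*π*(l:ℝ)*s/n)))
           - Real.cos (2*π*((((k:ℤ)-(l:ℤ)) : ℤ) : ℝ)*p/n + 2*π*l*s/n))/2 := by
    intro p _
    rw [polarSS,
      show 2*π*(k:ℝ)*p/n + 2*π*l*((s:ℝ)-p)/n
          = 2*π*((((k:ℤ)-(l:ℤ)) : ℤ) : ℝ)*p/n + 2*π*l*s/n by push_cast; ring,
      show 2*π*(k:ℝ)*p/n - 2*π*l*((s:ℝ)-p)/n
          = 2*π*((((k:ℤ)+(l:ℤ)) : ℤ) : ℝ)*p/n + (-(2*π*(l:ℝ)*s/n)) by push_cast; ring]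
  rw [Finset.sum_congr rfl e, ← Finset.sum_div, Finset.sum_sub_distrib,
    polarSumCos n hn _ hkl' _, polarSumCos n hn _ hkl _]
  norm_num

lemma polarSumCT (n k l s : ℕ) (hn : 0 < n)
    (hkl : ¬ ((n:ℤ) ∣ ((k:ℤ)+(l:ℤ)))) (hkl' : ¬ ((n:ℤ) ∣ ((k:ℤ)-(l:ℤ)))) :
    ∑ p ∈ Finset.range n, Real.cos (2*π*k*p/n) * Real.sin (2*π*l*((s:ℝ)-p)/n) = 0 := by
  have e : ∀ p ∈ Finset.range n,
      Real.cos (2*π*(k:ℝ)*p/n) * Real.sin (2*π*l*((s:ℝ)-p)/n)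
        = (Real.sin (2*π*((((k:ℤ)-(l:ℤ)) : ℤ) : ℝ)*p/n + 2*π*l*s/n)
           - Real.sin (2*π*((((k:ℤ)+(l:ℤ)) : ℤ) : ℝ)*p/n + (-(2*π*(l:ℝ)*s/n))))/2 := by
    intro p _
    rw [polarCS,
      show 2*π*(k:ℝ)*p/n + 2*π*l*((s:ℝ)-p)/n
          = 2*π*((((k:ℤ)-(l:ℤ)) : ℤ) : ℝ)*p/n + 2*π*l*s/n by push_cast; ring,
      show 2*π*(k:ℝ)*p/n - 2*π*l*((s:ℝ)-p)/n
          = 2*π*((((k:ℤ)+(l:ℤ)) : ℤ) : ℝ)*p/n + (-(2*π*(l:ℝ)*s/n)) by push_cast; ring]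
  rw [Finset.sum_congr rfl e, ← Finset.sum_div, Finset.sum_sub_distrib,
    polarSumSin n hn _ hkl' _, polarSumSin n hn _ hkl _]
  norm_num

lemma polarSumCCsame (n k s : ℕ) (hn : 0 < n) (h2k : ¬ ((n:ℤ) ∣ ((2*k:ℕ):ℤ))) :
    ∑ p ∈ Finset.range n, Real.cos (2*π*k*p/n) * Real.cos (2*π*k*((s:ℝ)-p)/n)
      = n * Real.cos (2*π*k*s/n) / 2 := by
  have e : ∀ p ∈ Finset.range n,
      Real.cos (2*π*(k:ℝ)*p/n) * Real.cos (2*π*k*((s:ℝ)-p)/n)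
        = (Real.cos (2*π*(k:ℝ)*s/n)
           + Real.cos (2*π*(((2*k:ℕ):ℤ) : ℝ)*p/n + (-(2*π*(k:ℝ)*s/n))))/2 := by
    intro p _
    rw [polarCC,
      show 2*π*(k:ℝ)*p/n + 2*π*k*((s:ℝ)-p)/n = 2*π*(k:ℝ)*s/n by ring,
      show 2*π*(k:ℝ)*p/n - 2*π*k*((s:ℝ)-p)/n
          = 2*π*(((2*k:ℕ):ℤ) : ℝ)*p/n + (-(2*π*(k:ℝ)*s/n)) by push_cast; ring]
  rw [Finset.sum_congr rfl e, ← Finset.sum_div, Finset.sum_add_distrib,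
    polarSumCos n hn _ h2k _, Finset.sum_const, Finset.card_range, nsmul_eq_mul]
  ring

lemma polarSumTTsame (n k s : ℕ) (hn : 0 < n) (h2k : ¬ ((n:ℤ) ∣ ((2*k:ℕ):ℤ))) :
    ∑ p ∈ Finset.range n, Real.sin (2*π*k*p/n) * Real.sin (2*π*k*((s:ℝ)-p)/n)
      = -(n * Real.cos (2*π*k*s/n) / 2) := by
  have e : ∀ p ∈ Finset.range n,
      Real.sin (2*π*(k:ℝ)*p/n) * Real.sin (2*π*k*((s:ℝ)-p)/n)
        = (Real.cos (2*π*(((2*k:ℕ):ℤ) : ℝ)*p/n + (-(2*π*(k:ℝ)*s/n)))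
           - Real.cos (2*π*(k:ℝ)*s/n))/2 := by
    intro p _
    rw [polarSS,
      show 2*π*(k:ℝ)*p/n + 2*π*k*((s:ℝ)-p)/n = 2*π*(k:ℝ)*s/n by ring,
      show 2*π*(k:ℝ)*p/n - 2*π*k*((s:ℝ)-p)/n
          = 2*π*(((2*k:ℕ):ℤ) : ℝ)*p/n + (-(2*π*(k:ℝ)*s/n)) by push_cast; ring]
  rw [Finset.sum_congr rfl e, ← Finset.sum_div, Finset.sum_sub_distrib,
    polarSumCos n hn _ h2k _, Finset.sum_const, Finset.card_range, nsmul_eq_mul]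
  ring

lemma polarSumCTsame (n k s : ℕ) (hn : 0 < n) (h2k : ¬ ((n:ℤ) ∣ ((2*k:ℕ):ℤ))) :
    ∑ p ∈ Finset.range n, Real.cos (2*π*k*p/n) * Real.sin (2*π*k*((s:ℝ)-p)/n)
      = n * Real.sin (2*π*k*s/n) / 2 := by
  have e : ∀ p ∈ Finset.range n,
      Real.cos (2*π*(k:ℝ)*p/n) * Real.sin (2*π*k*((s:ℝ)-p)/n)
        = (Real.sin (2*π*(k:ℝ)*s/n)
           - Real.sin (2*π*(((2*k:ℕ):ℤ) : ℝ)*p/n + (-(2*π*(k:ℝ)*s/n))))/2 := by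
    intro p _
    rw [polarCS,
      show 2*π*(k:ℝ)*p/n + 2*π*k*((s:ℝ)-p)/n = 2*π*(k:ℝ)*s/n by ring,
      show 2*π*(k:ℝ)*p/n - 2*π*k*((s:ℝ)-p)/n
          = 2*π*(((2*k:ℕ):ℤ) : ℝ)*p/n + (-(2*π*(k:ℝ)*s/n)) by push_cast; ring]
  rw [Finset.sum_congr rfl e, ← Finset.sum_div, Finset.sum_sub_distrib,
    polarSumSin n hn _ h2k _, Finset.sum_const, Finset.card_range, nsmul_eq_mul]
  ring

theorem polar_idempotent_bases (n : ℕ) (hn : Even n) (hn1 : 1 ≤ n) :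
    ePlus n ^ 2 = ePlus n ∧ eMinus n ^ 2 = eMinus n ∧ ePlus n * eMinus n = 0 ∧
    (∀ k, 1 ≤ k → k ≤ n / 2 - 1 →
      eK n k ^ 2 = eK n k ∧ eTildeK n k ^ 2 = -eK n k ∧
      eK n k * eTildeK n k = eTildeK n k) ∧
    (∀ k l, 1 ≤ k → k ≤ n / 2 - 1 → 1 ≤ l → l ≤ n / 2 - 1 → k ≠ l →
      eK n k * eK n l = 0 ∧ eK n k * eTildeK n l = 0 ∧
      eTildeK n k * eTildeK n l = 0) := by
  have hn0 : 0 < n := hn1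
  have hnr : (n:ℝ) ≠ 0 := Nat.cast_ne_zero.mpr hn0.ne'
  obtain ⟨m, hm⟩ := id hn
  have hone : (∑ p ∈ Finset.range n, hP n p) = ∑ p ∈ Finset.range n, (1:ℝ) • hP n p := by
    simp
  refine ⟨?_, ?_, ?_, ?_, ?_⟩
  · -- ePlus ^ 2 = ePlus
    rw [ePlus, hone, sq, smul_mul_smul_comm, polarConv n hn0, Finset.smul_sum, Finset.smul_sum]
    refine Finset.sum_congr rfl fun s hs => ?_
    rw [smul_smul, smul_smul]
    congr 1
    have : (∑ p ∈ Finset.range n, (1:ℝ) * 1) = n := by simp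
    rw [this]
    field_simp
  · -- eMinus ^ 2 = eMinus
    rw [eMinus, sq, smul_mul_smul_comm, polarConv n hn0, Finset.smul_sum, Finset.smul_sum]
    refine Finset.sum_congr rfl fun s hs => ?_
    simp only [Finset.mem_range] at hs
    rw [smul_smul, smul_smul]
    congr 1
    have e : ∀ p ∈ Finset.range n,
        (-1:ℝ)^p * (-1:ℝ)^((n+s-p)%n) = (-1:ℝ)^s := by
      intro p hp
      simp only [Finset.mem_range] at hp
      rw [polarNegPowMod n s p hn (by omega)]
      rw [show (-1:ℝ)^p * ((-1:ℝ)^s * (-1:ℝ)^p) = (-1:ℝ)^s * ((-1:ℝ)^p)^2 by ring,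
        show ((-1:ℝ)^p)^2 = ((-1:ℝ)^2)^p by rw [← pow_mul, ← pow_mul, Nat.mul_comm]]
      norm_num
    rw [Finset.sum_congr rfl e, Finset.sum_const, Finset.card_range, nsmul_eq_mul]
    field_simp
  · -- ePlus * eMinus = 0
    rw [ePlus, eMinus, hone, smul_mul_smul_comm, polarConv n hn0]
    have e : ∀ s ∈ Finset.range n,
        (∑ p ∈ Finset.range n, (1:ℝ) * (-1:ℝ)^((n+s-p)%n)) • hP n s = 0 := by
      intro s hs
      simp only [Finset.mem_range] at hs
      have e2 : ∀ p ∈ Finset.range n,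
          (1:ℝ) * (-1:ℝ)^((n+s-p)%n) = (-1:ℝ)^s * (-1:ℝ)^p := by
        intro p hp
        simp only [Finset.mem_range] at hp
        rw [polarNegPowMod n s p hn (by omega), one_mul]
      rw [Finset.sum_congr rfl e2, ← Finset.mul_sum, neg_one_geom_sum, if_pos hn,
        mul_zero, zero_smul]
    rw [Finset.sum_congr rfl e, Finset.sum_const, smul_zero, smul_zero]
  · -- same k identities
    intro k hk1 hk2
    have hkn : 2 * k ≤ n - 2 := by omega
    have h2k : ¬ ((n:ℤ) ∣ ((2*k:ℕ):ℤ)) := polarNotDvd n _ (by omega) (by omega)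
    refine ⟨?_, ?_, ?_⟩
    · -- eK ^ 2 = eK
      rw [eK, sq, smul_mul_smul_comm, polarConv n hn0, Finset.smul_sum, Finset.smul_sum]
      refine Finset.sum_congr rfl fun s hs => ?_
      simp only [Finset.mem_range] at hs
      rw [smul_smul, smul_smul]
      congr 1
      have e : ∀ p ∈ Finset.range n,
          Real.cos (2*π*k*p/n) * Real.cos (2*π*k*((n+s-p)%n : ℕ)/n)
            = Real.cos (2*π*k*p/n) * Real.cos (2*π*k*((s:ℝ)-p)/n) := by
        intro p hp
        simp only [Finset.mem_range] at hp
        rw [polarCosMod n k s p hn0 (by omega)]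
      rw [Finset.sum_congr rfl e, polarSumCCsame n k s hn0 h2k]
      field_simp
    · -- eTildeK ^ 2 = - eK
      rw [eTildeK, eK, sq, smul_mul_smul_comm, polarConv n hn0, ← smul_neg,
        ← Finset.sum_neg_distrib, Finset.smul_sum, Finset.smul_sum]
      refine Finset.sum_congr rfl fun s hs => ?_
      simp only [Finset.mem_range] at hs
      rw [← neg_smul, smul_smul, smul_smul]
      congr 1
      have e : ∀ p ∈ Finset.range n,
          Real.sin (2*π*k*p/n) * Real.sin (2*π*k*((n+s-p)%n : ℕ)/n)
            = Real.sin (2*π*k*p/n) * Real.sin (2*π*k*((s:ℝ)-p)/n) := by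
        intro p hp
        simp only [Finset.mem_range] at hp
        rw [polarSinMod n k s p hn0 (by omega)]
      rw [Finset.sum_congr rfl e, polarSumTTsame n k s hn0 h2k]
      field_simp
    · -- eK * eTildeK = eTildeK
      rw [eK, eTildeK, smul_mul_smul_comm, polarConv n hn0, Finset.smul_sum, Finset.smul_sum]
      refine Finset.sum_congr rfl fun s hs => ?_
      simp only [Finset.mem_range] at hs
      rw [smul_smul, smul_smul]
      congr 1
      have e : ∀ p ∈ Finset.range n,
          Real.cos (2*π*k*p/n) * Real.sin (2*π*k*((n+s-p)%n : ℕ)/n)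
            = Real.cos (2*π*k*p/n) * Real.sin (2*π*k*((s:ℝ)-p)/n) := by
        intro p hp
        simp only [Finset.mem_range] at hp
        rw [polarSinMod n k s p hn0 (by omega)]
      rw [Finset.sum_congr rfl e, polarSumCTsame n k s hn0 h2k]
      field_simp
  · -- distinct k, l
    intro k l hk1 hk2 hl1 hl2 hkl
    have hadd : ¬ ((n:ℤ) ∣ ((k:ℤ)+(l:ℤ))) := polarNotDvd n _ (by omega) (by omega)
    have hsub : ¬ ((n:ℤ) ∣ ((k:ℤ)-(l:ℤ))) := polarNotDvd n _ (by omega) (by omega)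
    refine ⟨?_, ?_, ?_⟩
    · rw [eK, eK, smul_mul_smul_comm, polarConv n hn0]
      have e : ∀ s ∈ Finset.range n,
          (∑ p ∈ Finset.range n,
            Real.cos (2*π*k*p/n) * Real.cos (2*π*l*((n+s-p)%n : ℕ)/n)) • hP n s = 0 := by
        intro s hs
        simp only [Finset.mem_range] at hs
        have e2 : ∀ p ∈ Finset.range n,
            Real.cos (2*π*k*p/n) * Real.cos (2*π*l*((n+s-p)%n : ℕ)/n)
              = Real.cos (2*π*k*p/n) * Real.cos (2*π*l*((s:ℝ)-p)/n) := by
          intro p hp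
          simp only [Finset.mem_range] at hp
          rw [polarCosMod n l s p hn0 (by omega)]
        rw [Finset.sum_congr rfl e2, polarSumCC n k l s hn0 hadd hsub, zero_smul]
      rw [Finset.sum_congr rfl e, Finset.sum_const, smul_zero, smul_zero]
    · rw [eK, eTildeK, smul_mul_smul_comm, polarConv n hn0]
      have e : ∀ s ∈ Finset.range n,
          (∑ p ∈ Finset.range n,
            Real.cos (2*π*k*p/n) * Real.sin (2*π*l*((n+s-p)%n : ℕ)/n)) • hP n s = 0 := by
        intro s hs
        simp only [Finset.mem_range] at hs
        have e2 : ∀ p ∈ Finset.range n,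
            Real.cos (2*π*k*p/n) * Real.sin (2*π*l*((n+s-p)%n : ℕ)/n)
              = Real.cos (2*π*k*p/n) * Real.sin (2*π*l*((s:ℝ)-p)/n) := by
          intro p hp
          simp only [Finset.mem_range] at hp
          rw [polarSinMod n l s p hn0 (by omega)]
        rw [Finset.sum_congr rfl e2, polarSumCT n k l s hn0 hadd hsub, zero_smul]
      rw [Finset.sum_congr rfl e, Finset.sum_const, smul_zero, smul_zero]
    · rw [eTildeK, eTildeK, smul_mul_smul_comm, polarConv n hn0]
      have e : ∀ s ∈ Finset.range n,
          (∑ p ∈ Finset.range n,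
            Real.sin (2*π*k*p/n) * Real.sin (2*π*l*((n+s-p)%n : ℕ)/n)) • hP n s = 0 := by
        intro s hs
        simp only [Finset.mem_range] at hs
        have e2 : ∀ p ∈ Finset.range n,
            Real.sin (2*π*k*p/n) * Real.sin (2*π*l*((n+s-p)%n : ℕ)/n)
              = Real.sin (2*π*k*p/n) * Real.sin (2*π*l*((s:ℝ)-p)/n) := by
          intro p hp
          simp only [Finset.mem_range] at hp
          rw [polarSinMod n l s p hn0 (by omega)]
        rw [Finset.sum_congr rfl e2, polarSumTT n k l s hn0 hadd hsub, zero_smul]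
      rw [Finset.sum_congr rfl e, Finset.sum_const, smul_zero, smul_zero]
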